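/- arXiv:1810.11845 — 2 statements merged into one kernel-verified Lean document; each statement's English description precedes it below -/
import Mathlib

section
/- Let X be a smooth scheme over a scheme S of characteristic p > 0, and let (E, ∇) be a quasi-coherent O_X-module with integrable S-connection. Then the p-curvature map ψ(∇) : Der(X/S) → End_S(E), defined by D ↦ (∇(D))^p − ∇(D^p), is additive: ψ(∇)(D₁ + D₂) = ψ(∇)(D₁) + ψ(∇)(D₂) for local sections D₁, D₂ of Der(X/S). -/
/-!
Jacobson's formula: in a ring `T` of characteristic `p`, `(a + b) ^ p - a ^ p - b ^ p` lies in
every Lie subring containing `a` and `b`. Write `(a t + b) ^ p = ∑ sᵢ tⁱ` in `T[t]`. Its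
derivative is `∑ⱼ (a t + b) ^ j * a * (a t + b) ^ (p - 1 - j)`, which in characteristic `p`
equals `(ad (a t + b)) ^ (p - 1) a`, a polynomial with Lie coefficients; so each `i sᵢ` is a Lie
element, hence so is `sᵢ` for `0 < i < p`, and `(a + b) ^ p - a ^ p - b ^ p = ∑_{0<i<p} sᵢ`.

Since `∇` is a Lie homomorphism, `D ↦ (D, ∇ D)` maps `Der(A/R)` into the ring
`End_R(A) × End_R(M)` of characteristic `p`; Jacobson's formula there, applied to `D₁` and `D₂`,
gives one derivation `W` with `(D₁ + D₂) ^ p = D₁ ^ p + D₂ ^ p + W` and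
`∇(D₁ + D₂) ^ p = ∇ D₁ ^ p + ∇ D₂ ^ p + ∇ W`, and additivity of `∇` finishes.
-/

open Finset Polynomial

theorem Nat.Prime.cast_choose_sub_one {R : Type*} [Ring R] {p : ℕ} (hp : p.Prime)
    (hpR : (p : R) = 0) {m : ℕ} (hm : m ≤ p - 1) :
    ((p - 1).choose m : R) = (-1) ^ (p - 1 - m) := by
  induction hm using Nat.decreasingInduction with
  | self => simp
  | of_succ m hm ih =>
    have hpascal : p.choose (m + 1) = (p - 1).choose m + (p - 1).choose (m + 1) := by
      rw [← Nat.choose_succ_succ', Nat.sub_add_cancel hp.one_le]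
    obtain ⟨c, hc⟩ := hp.dvd_choose_self m.succ_ne_zero (by omega)
    have hcast : ((p - 1).choose m : R) + (p - 1).choose (m + 1) = 0 := by
      rw [← Nat.cast_add, ← hpascal, hc, Nat.cast_mul, hpR, zero_mul]
    rw [eq_neg_of_add_eq_zero_left hcast, ih, show p - 1 - m = p - 1 - (m + 1) + 1 by omega,
      pow_succ, mul_neg_one]

theorem Polynomial.derivative_pow_eq_sum {R : Type*} [Semiring R] (q : R[X]) (n : ℕ) :
    derivative (q ^ n) = ∑ i ∈ range n, q ^ i * derivative q * q ^ (n - 1 - i) := by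
  induction n with
  | zero => simp
  | succ n ih =>
    rw [pow_succ, derivative_mul, ih, sum_mul, sum_range_succ, Nat.add_sub_cancel, Nat.sub_self,
      pow_zero, mul_one]
    congr 1
    refine sum_congr rfl fun i hi => ?_
    rw [show n - i = n - 1 - i + 1 by have := mem_range.mp hi; omega, pow_succ, mul_assoc]

theorem AddSubgroup.mem_of_nsmul_mem_of_coprime {G : Type*} [AddCommGroup G] (H : AddSubgroup G)
    {p i : ℕ} (hpG : ∀ x : G, p • x = 0) (hi : i.Coprime p) {x : G} (hx : i • x ∈ H) : x ∈ H := by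
  obtain ⟨u, v, huv⟩ := Nat.isCoprime_iff_coprime.mpr hi
  have hx' : x = u • (i • x) :=
    calc x = (u * i + v * p : ℤ) • x := by rw [huv, one_smul]
      _ = u • (i • x) := by
        rw [add_smul, mul_smul, mul_smul, natCast_zsmul, natCast_zsmul, hpG, smul_zero, add_zero]
  rw [hx']
  exact H.zsmul_mem hx u

theorem LieSubalgebra.ad_pow_apply_mem {R L : Type*} [CommRing R] [LieRing L] [LieAlgebra R L]
    (S : LieSubalgebra R L) {x y : L} (hx : x ∈ S) (hy : y ∈ S) (k : ℕ) :
    (LieAlgebra.ad R L x ^ k) y ∈ S := by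
  induction k with
  | zero => exact hy
  | succ k ih =>
    rw [pow_succ', Module.End.mul_apply, LieAlgebra.ad_apply]
    exact S.lie_mem hx ih

section

attribute [local instance 100] LieRing.ofAssociativeRing

variable {T : Type*} [Ring T]

theorem LieAlgebra.ad_pow_sub_one_apply_eq_sum {p : ℕ} (hp : p.Prime)
    (hpT : (p : T) = 0) (x y : T) :
    (LieAlgebra.ad ℤ T x ^ (p - 1)) y = ∑ i ∈ range p, x ^ i * y * x ^ (p - 1 - i) := by
  have hpE : (p : Module.End ℤ T) = 0 := by
    ext z
    simp [hpT]
  rw [LieAlgebra.ad_eq_lmul_left_sub_lmul_right (R := ℤ) T, Pi.sub_apply, sub_eq_add_neg,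
    ((LinearMap.commute_mulLeft_right (R := ℤ) x x).neg_right).add_pow,
    Nat.sub_add_cancel hp.one_le, LinearMap.sum_apply]
  refine sum_congr rfl fun m hm => ?_
  have hm : m ≤ p - 1 := by have := mem_range.mp hm; omega
  rw [neg_pow', hp.cast_choose_sub_one hpE hm, mul_assoc, mul_assoc, ← pow_add, ← two_mul,
    pow_mul, neg_one_sq, one_pow, mul_one, LinearMap.pow_mulLeft, LinearMap.pow_mulRight,
    Module.End.mul_apply, LinearMap.mulLeft_apply, LinearMap.mulRight_apply, mul_assoc]

theorem Polynomial.coeff_lie (q r : T[X]) (n : ℕ) :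
    ⁅q, r⁆.coeff n = ∑ x ∈ antidiagonal n, ⁅q.coeff x.1, r.coeff x.2⁆ := by
  simp only [Ring.lie_def, coeff_sub, coeff_mul, sum_sub_distrib]
  rw [← Finset.Nat.sum_antidiagonal_swap (f := fun x => r.coeff x.1 * q.coeff x.2)]
  rfl

def LieSubalgebra.polynomial (S : LieSubalgebra ℤ T) : LieSubalgebra ℤ T[X] where
  carrier := {q | ∀ n, q.coeff n ∈ S}
  add_mem' hq hr n := by simpa only [coeff_add] using S.add_mem (hq n) (hr n)
  zero_mem' n := by simpa only [coeff_zero] using S.zero_mem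
  smul_mem' c q hq n := by simpa only [coeff_smul] using S.smul_mem c (hq n)
  lie_mem' hq hr n := by
    rw [coeff_lie]
    exact S.sum_mem fun x _ => S.lie_mem (hq x.1) (hr x.2)

theorem LieSubalgebra.monomial_mem_polynomial {S : LieSubalgebra ℤ T} (k : ℕ) {a : T}
    (ha : a ∈ S) : monomial k a ∈ S.polynomial := by
  intro n
  rw [coeff_monomial]
  split_ifs
  exacts [ha, S.zero_mem]

theorem LieSubalgebra.add_pow_sub_pow_sub_pow_mem {p : ℕ} (hp : p.Prime) (hpT : (p : T) = 0)
    (S : LieSubalgebra ℤ T) {a b : T} (ha : a ∈ S) (hb : b ∈ S) :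
    (a + b) ^ p - a ^ p - b ^ p ∈ S := by
  set α : T[X] := C a * X + C b
  have hCa : C a ∈ S.polynomial := by
    simpa only [monomial_zero_left] using S.monomial_mem_polynomial 0 ha
  have hα : α ∈ S.polynomial := add_mem
    (by simpa only [C_mul_X_eq_monomial] using S.monomial_mem_polynomial 1 ha)
    (by simpa only [monomial_zero_left] using S.monomial_mem_polynomial 0 hb)
  have hpX : (p : T[X]) = 0 := by rw [← C_eq_natCast, hpT, C_0]
  have hderiv : derivative (α ^ p) ∈ S.polynomial := by
    rw [derivative_pow_eq_sum, show derivative α = C a by simp [α],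
      ← LieAlgebra.ad_pow_sub_one_apply_eq_sum hp hpX]
    exact S.polynomial.ad_pow_apply_mem hα hCa _
  have hmiddle : ∀ i, 0 < i → i < p → (α ^ p).coeff i ∈ S := by
    intro i hi hip
    obtain ⟨j, rfl⟩ : ∃ j, i = j + 1 := ⟨i - 1, by omega⟩
    have hj := hderiv j
    rw [coeff_derivative, ← Nat.cast_succ, ← nsmul_eq_mul'] at hj
    refine S.toSubmodule.toAddSubgroup.mem_of_nsmul_mem_of_coprime
      (fun x => by rw [nsmul_eq_mul, hpT, zero_mul]) ?_ hj
    exact (hp.coprime_iff_not_dvd.mpr (Nat.not_dvd_of_pos_of_lt hi hip)).symm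
  have hsum : (a + b) ^ p = ∑ i ∈ range (p + 1), (α ^ p).coeff i := by
    let ev₁ : T[X] →+* T := eval₂RingHom' (RingHom.id T) 1 fun _ => Commute.one_right _
    have hdeg : (α ^ p).natDegree < p + 1 :=
      Nat.lt_succ_of_le ((natDegree_pow_le_of_le p natDegree_linear_le).trans (mul_one p).le)
    calc (a + b) ^ p = ev₁ (α ^ p) := by rw [map_pow]; simp [ev₁, α]
      _ = _ := by simp [ev₁, eval₂_eq_sum_range' _ hdeg]
  have hbottom : (α ^ p).coeff 0 = b ^ p := by
    rw [← constantCoeff_apply, map_pow, constantCoeff_apply]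
    simp [α]
  have htop : (α ^ p).coeff p = a ^ p := by
    simpa [α] using coeff_pow_of_natDegree_le (m := p) (natDegree_linear_le (a := a) (b := b))
  obtain ⟨n, rfl⟩ : ∃ n, p = n + 1 := ⟨p - 1, (Nat.sub_add_cancel hp.one_le).symm⟩
  rw [hsum, sum_range_succ, sum_range_succ', hbottom, htop, add_sub_cancel_right,
    add_sub_cancel_right]
  exact S.sum_mem fun i hi => hmiddle _ i.succ_pos (by simpa using mem_range.mp hi)

theorem LieHom.exists_map_eq_add_pow_sub_pow_sub_pow {L : Type*} [LieRing L] {p : ℕ}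
    (hp : p.Prime) (hpT : (p : T) = 0) (f : L →ₗ⁅ℤ⁆ T) (x y : L) :
    ∃ z, f z = f (x + y) ^ p - f x ^ p - f y ^ p := by
  rw [map_add]
  exact f.mem_range _ |>.mp <|
    f.range.add_pow_sub_pow_sub_pow_mem hp hpT (f.mem_range_self x) (f.mem_range_self y)

end

theorem Module.End.natCast_eq_zero {R A M : Type*} [Semiring R] [Semiring A] [AddCommMonoid M]
    [Module R M] [Module A M] {p : ℕ} (hpA : (p : A) = 0) : (p : Module.End R M) = 0 := by
  ext m
  rw [Module.End.natCast_apply, ← Nat.cast_smul_eq_nsmul A, hpA, zero_smul, LinearMap.zero_apply]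

def LieHom.ofAddMonoidHom {L L' : Type*} [LieRing L] [LieRing L'] (f : L →+ L')
    (hf : ∀ x y, f ⁅x, y⁆ = ⁅f x, f y⁆) : L →ₗ⁅ℤ⁆ L' :=
  { f.toIntLinearMap with map_lie' := hf _ _ }

universe u

/-- `X = Spec A` over `S = Spec R`; the connection is recorded through its action
`D ↦ ∇(D)` on derivations, integrability as compatibility with brackets, and `D₁p`, `D₂p`, `D₁₂p`
are the `p`-th powers of `D₁`, `D₂`, `D₁ + D₂` in `Der(A/R)`. -/
theorem p_curvature_additive_general
    {R A : Type u} {M : Type*} [CommRing R] [CommRing A] [Algebra R A]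
    [AddCommGroup M] [Module R M] [Module A M]
    (p : ℕ) [Fact p.Prime] [CharP A p]
    (conn : Derivation R A A → Module.End R M)
    (hadd : ∀ D₁ D₂ : Derivation R A A, conn (D₁ + D₂) = conn D₁ + conn D₂)
    (hint : ∀ D₁ D₂ : Derivation R A A, conn ⁅D₁, D₂⁆ = ⁅conn D₁, conn D₂⁆)
    (D₁ D₂ D₁p D₂p D₁₂p : Derivation R A A)
    (h1 : ∀ a : A, D₁p a = (⇑D₁)^[p] a)
    (h2 : ∀ a : A, D₂p a = (⇑D₂)^[p] a)
    (h12 : ∀ a : A, D₁₂p a = (⇑(D₁ + D₂))^[p] a) :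
    (conn (D₁ + D₂)) ^ p - conn D₁₂p =
      ((conn D₁) ^ p - conn D₁p) + ((conn D₂) ^ p - conn D₂p) := by
  let _ : LieRing (Module.End R A) := LieRing.ofAssociativeRing
  let _ : LieRing (Module.End R M) := LieRing.ofAssociativeRing
  let toEnd : Derivation R A A →ₗ⁅ℤ⁆ Module.End R A :=
    .ofAddMonoidHom (.mk' (fun D => (D : Module.End R A)) Derivation.coe_add_linearMap)
      fun _ _ => Derivation.commutator_coe_linear_map
  let connHom : Derivation R A A →ₗ⁅ℤ⁆ Module.End R M :=
    .ofAddMonoidHom (AddMonoidHom.mk' conn hadd) hint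
  have hpE : (p : Module.End R A × Module.End R M) = 0 :=
    Prod.ext (Module.End.natCast_eq_zero (CharP.cast_eq_zero A p))
      (Module.End.natCast_eq_zero (CharP.cast_eq_zero A p))
  obtain ⟨W, hW⟩ := (toEnd.prod connHom).exists_map_eq_add_pow_sub_pow_sub_pow Fact.out hpE D₁ D₂
  have hW₁ : (W : Module.End R A) = ((D₁ + D₂ : Derivation R A A) : Module.End R A) ^ p
      - (D₁ : Module.End R A) ^ p - (D₂ : Module.End R A) ^ p := congrArg Prod.fst hW
  have hW₂ : conn W = conn (D₁ + D₂) ^ p - conn D₁ ^ p - conn D₂ ^ p := congrArg Prod.snd hW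
  have hD₁₂p : D₁₂p = D₁p + D₂p + W := by
    ext a
    have := LinearMap.congr_fun hW₁ a
    simp only [LinearMap.sub_apply, Module.End.pow_apply, Derivation.coeFn_coe] at this
    rw [Derivation.add_apply, Derivation.add_apply, h1, h2, h12, this]
    abel
  rw [hD₁₂p, hadd (D₁p + D₂p), hadd D₁p, hW₂]
  abel

/-- **p-curvature is additive** (Katz, Proposition 5.2).
`X = Spec A` smooth over `S = Spec R` in characteristic `p > 0`, `(M, conn)` a
quasi-coherent module with integrable connection, the connection being given on
derivations `D : Der(X/S)` with the Leibniz rule and compatibility with brackets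
(integrability).  The `p`-curvature `ψ(∇)(D) = (∇ D)^p - ∇(D^p)` is additive in `D`,
where `D^p` denotes the derivation whose underlying map is the `p`-fold iterate of `D`. -/
theorem p_curvature_additive
    {R A : Type u} {M : Type*} [CommRing R] [CommRing A] [Algebra R A]
    [AddCommGroup M] [Module R M] [Module A M] [IsScalarTower R A M]
    (p : ℕ) [Fact p.Prime] [CharP A p]
    [Algebra.FormallySmooth R A]
    (conn : Derivation R A A → Module.End R M)
    (hadd : ∀ D₁ D₂ : Derivation R A A, conn (D₁ + D₂) = conn D₁ + conn D₂)
    (hlin : ∀ (f : A) (D : Derivation R A A), conn (f • D) = f • conn D)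
    (hleibniz : ∀ (D : Derivation R A A) (a : A) (m : M),
      conn D (a • m) = a • conn D m + D a • m)
    (hint : ∀ D₁ D₂ : Derivation R A A, conn ⁅D₁, D₂⁆ = ⁅conn D₁, conn D₂⁆)
    (D₁ D₂ D₁p D₂p D₁₂p : Derivation R A A)
    (h1 : ∀ a : A, D₁p a = (⇑D₁)^[p] a)
    (h2 : ∀ a : A, D₂p a = (⇑D₂)^[p] a)
    (h12 : ∀ a : A, D₁₂p a = (⇑(D₁ + D₂))^[p] a) :
    (conn (D₁ + D₂)) ^ p - conn D₁₂p =
      ((conn D₁) ^ p - conn D₁p) + ((conn D₂) ^ p - conn D₂p) :=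
  p_curvature_additive_general p conn hadd hint D₁ D₂ D₁p D₂p D₁₂p h1 h2 h12
end

section
/- With X smooth over S of characteristic p > 0 and (E, ∇) a module with integrable connection, the p-curvature is p-linear: for local sections f of O_X and D of Der(X/S), one has ψ(∇)(f·D) = f^p · ψ(∇)(D). -/
namespace PCurvAux

variable {A : Type*} [CommRing A]

/-- Coefficients in the expansion of `(f·δ)^n = ∑ b n k · δ^k`. -/
def bco (f : A) (δ : A → A) : ℕ → ℕ → A
  | 0, 0 => 1
  | 0, _+1 => 0
  | n+1, 0 => f * δ (bco f δ n 0)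
  | n+1, k+1 => f * (δ (bco f δ n (k+1)) + bco f δ n k)

variable (f : A) (δ : A → A)

theorem bco_of_lt (hδ0 : δ 0 = 0) : ∀ n k, n < k → bco f δ n k = 0 := by
  intro n
  induction n with
  | zero => intro k hk; match k, hk with | (k+1), _ => rfl
  | succ n ih =>
    intro k hk
    match k, hk with
    | (k+1), hk =>
      have h1 : bco f δ n (k+1) = 0 := ih _ (by omega)
      have h2 : bco f δ n k = 0 := ih _ (by omega)
      show f * (δ (bco f δ n (k+1)) + bco f δ n k) = 0
      rw [h1, h2, hδ0, add_zero, mul_zero]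

theorem bco_zero (hδ0 : δ 0 = 0) (hδ1 : δ 1 = 0) : ∀ n, bco f δ (n+1) 0 = 0 := by
  intro n
  induction n with
  | zero => show f * δ 1 = 0; rw [hδ1, mul_zero]
  | succ n ih => show f * δ (bco f δ (n+1) 0) = 0; rw [ih, hδ0, mul_zero]

theorem bco_diag (hδ0 : δ 0 = 0) : ∀ n, bco f δ n n = f ^ n := by
  intro n
  induction n with
  | zero => simp [bco]
  | succ n ih =>
    show f * (δ (bco f δ n (n+1)) + bco f δ n n) = f ^ (n+1)
    rw [bco_of_lt f δ hδ0 n (n+1) (by omega), hδ0, zero_add, ih, pow_succ, mul_comm]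

theorem bco_one (hδ0 : δ 0 = 0) (hδ1 : δ 1 = 0) :
    ∀ n, bco f δ (n+1) 1 = (fun a => f * δ a)^[n] f := by
  intro n
  induction n with
  | zero => show f * (δ (bco f δ 0 1) + bco f δ 0 0) = f; show f * (δ 0 + 1) = f
            rw [hδ0, zero_add, mul_one]
  | succ n ih =>
    show f * (δ (bco f δ (n+1) 1) + bco f δ (n+1) 0) = _
    rw [bco_zero f δ hδ0 hδ1, add_zero, ih, Function.iterate_succ_apply']

/-- Transfer of the coefficients along a differential ring hom. -/
theorem bco_map {A' : Type*} [CommRing A'] (φ : A →+* A') (δ' : A' → A')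
    (hc : ∀ a, φ (δ a) = δ' (φ a)) : ∀ n k, φ (bco f δ n k) = bco (φ f) δ' n k := by
  intro n
  induction n with
  | zero => intro k; match k with
            | 0 => show φ 1 = 1; exact map_one φ
            | (k+1) => show φ 0 = 0; exact map_zero φ
  | succ n ih =>
    intro k
    match k with
    | 0 => show φ (f * δ (bco f δ n 0)) = (φ f) * δ' (bco (φ f) δ' n 0)
           rw [map_mul, hc, ih]
    | (k+1) =>
      show φ (f * (δ (bco f δ n (k+1)) + bco f δ n k)) = _
      rw [map_mul, map_add, hc, ih, ih]
      rfl

/-- The key expansion: in any ring `B` with a commutation relation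
`u * L a = L a * u + L (δ a)`, one has `(L f * u)^n = ∑ L (bco n k) * u^k`. -/
theorem expand {B : Type*} [Ring B] (L : A →+* B) (u : B)
    (hδ0 : δ 0 = 0)
    (hrel : ∀ a, u * L a = L a * u + L (δ a)) (n : ℕ) :
    (L f * u) ^ n = ∑ k ∈ Finset.range (n+1), L (bco f δ n k) * u ^ k := by
  induction n with
  | zero => simp [bco]
  | succ n ih =>
    rw [pow_succ', ih, Finset.mul_sum]
    have step : ∀ k, L f * u * (L (bco f δ n k) * u ^ k)
        = L (f * bco f δ n k) * u ^ (k+1) + L (f * δ (bco f δ n k)) * u ^ k := by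
      intro k
      rw [map_mul, map_mul]
      have h1 : L f * u * (L (bco f δ n k) * u ^ k)
          = L f * (u * L (bco f δ n k)) * u ^ k := by
        noncomm_ring
      rw [h1, hrel]
      rw [pow_succ']
      noncomm_ring
    simp_rw [step, Finset.sum_add_distrib]
    have key : ∀ k, L (bco f δ (n+1) (k+1)) * u ^ (k+1)
        = L (f * δ (bco f δ n (k+1))) * u ^ (k+1) + L (f * bco f δ n k) * u ^ (k+1) := by
      intro k
      show L (f * (δ (bco f δ n (k+1)) + bco f δ n k)) * u ^ (k+1) = _
      rw [mul_add, map_add, add_mul]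
    rw [Finset.sum_range_succ' (fun k => L (bco f δ (n+1) k) * u ^ k) (n+1)]
    simp_rw [key]
    rw [Finset.sum_add_distrib]
    have h0 : (L (bco f δ (n+1) 0) * u ^ 0 : B) = L (f * δ (bco f δ n 0)) * u ^ 0 := rfl
    have hb : ∑ k ∈ Finset.range (n+1), L (f * δ (bco f δ n k)) * u ^ k
        = (∑ k ∈ Finset.range (n+1), L (f * δ (bco f δ n (k+1))) * u ^ (k+1))
          + L (f * δ (bco f δ n 0)) * u ^ 0 := by
      rw [Finset.sum_range_succ' (fun k => L (f * δ (bco f δ n k)) * u ^ k) n]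
      congr 1
      rw [Finset.sum_range_succ]
      have : bco f δ n (n+1) = 0 := bco_of_lt f δ hδ0 n (n+1) (by omega)
      rw [this, hδ0, mul_zero, map_zero, zero_mul, add_zero]
    rw [hb, h0]
    abel

section Deriv
variable {R A : Type*} [CommRing R] [CommRing A] [Algebra R A]

theorem iterate_leibniz (d : Derivation R A A) (n : ℕ) (x y : A) :
    (⇑d)^[n] (x * y) =
      ∑ k ∈ Finset.range (n+1), n.choose k • ((⇑d)^[n-k] x * (⇑d)^[k] y) := by
  induction n with
  | zero => simp
  | succ n IH =>
    have step2 : (⇑d)^[n+1] (x * y) =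
        (∑ k ∈ Finset.range (n+1), n.choose k • ((⇑d)^[n-k+1] x * (⇑d)^[k] y)) +
        ∑ k ∈ Finset.range (n+1), n.choose k • ((⇑d)^[n-k] x * (⇑d)^[k+1] y) := by
      rw [Function.iterate_succ_apply', IH, map_sum]
      simp_rw [Derivation.map_smul_of_tower, d.leibniz, smul_eq_mul,
        Function.iterate_succ_apply', smul_add, Finset.sum_add_distrib]
      rw [add_comm]
      congr 1
      all_goals exact Finset.sum_congr rfl fun k _ => by rw [mul_comm]
    have hS1 : (∑ k ∈ Finset.range (n+1), n.choose k • ((⇑d)^[n-k+1] x * (⇑d)^[k] y))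
        = (∑ k ∈ Finset.range (n+1), n.choose (k+1) • ((⇑d)^[n-k] x * (⇑d)^[k+1] y))
          + 1 • ((⇑d)^[n+1] x * (⇑d)^[0] y) := by
      rw [Finset.sum_range_succ' (fun k => n.choose k • ((⇑d)^[n-k+1] x * (⇑d)^[k] y)) n]
      rw [Finset.sum_range_succ (fun k => n.choose (k+1) • ((⇑d)^[n-k] x * (⇑d)^[k+1] y)) n]
      rw [Nat.choose_succ_self, zero_smul, add_zero]
      congr 1
      · exact Finset.sum_congr rfl fun k hk => by
          rw [Finset.mem_range] at hk
          rw [show n - (k+1) + 1 = n - k by omega]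
      · rw [Nat.choose_zero_right, Nat.sub_zero]
    rw [step2, hS1]
    rw [Finset.sum_range_succ' (fun k => (n+1).choose k • ((⇑d)^[n+1-k] x * (⇑d)^[k] y)) (n+1)]
    simp only [Nat.choose_succ_succ, add_smul, Finset.sum_add_distrib,
      Nat.choose_zero_right, Nat.succ_sub_succ_eq_sub, Nat.sub_zero]
    abel

theorem iterate_p_leibniz (p : ℕ) [hp : Fact p.Prime] [CharP A p]
    (d : Derivation R A A) (x y : A) :
    (⇑d)^[p] (x * y) = x * (⇑d)^[p] y + y * (⇑d)^[p] x := by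
  have hpprime := hp.out
  obtain ⟨m, hm⟩ : ∃ m, p = m + 1 := ⟨p - 1, (Nat.succ_pred_eq_of_pos hp.out.pos).symm⟩
  have hcast : ((p : ℕ) : A) = 0 := CharP.cast_eq_zero A p
  subst hm
  rw [iterate_leibniz, Finset.sum_range_succ, Finset.sum_range_succ']
  have mid : ∀ k ∈ Finset.range m,
      (m+1).choose (k+1) • ((⇑d)^[m+1-(k+1)] x * (⇑d)^[k+1] y) = 0 := by
    intro k hk
    rw [Finset.mem_range] at hk
    obtain ⟨c, hc⟩ := hpprime.dvd_choose_self (Nat.succ_ne_zero k) (by omega)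
    rw [hc, mul_smul, nsmul_eq_mul, hcast, zero_mul]
  rw [Finset.sum_congr rfl mid, Finset.sum_const_zero, zero_add]
  simp only [Nat.choose_zero_right, Nat.sub_zero, Nat.choose_self, Nat.sub_self,
    Function.iterate_zero, id_eq, one_smul]
  ring

end Deriv

section Act
variable {R A M : Type*} [CommRing R] [CommRing A] [Algebra R A]
  [AddCommGroup M] [Module R M] [Module A M] [IsScalarTower R A M]

/-- The action of `A` on `M` as a ring hom into `R`-linear endomorphisms. -/
def actHom : A →+* Module.End R M where
  toFun a :=
    { toFun := fun m => a • m
      map_add' := fun m n => smul_add a m n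
      map_smul' := fun r m => smul_comm a r m }
  map_one' := LinearMap.ext fun m => one_smul A m
  map_mul' := fun a b => LinearMap.ext fun m => mul_smul a b m
  map_zero' := LinearMap.ext fun m => zero_smul A m
  map_add' := fun a b => LinearMap.ext fun m => add_smul a b m

@[simp] theorem actHom_apply (a : A) (m : M) :
    (actHom (R := R) (M := M) a) m = a • m := rfl

theorem actHom_mul_eq_smul (a : A) (g : Module.End R M) :
    actHom (R := R) (M := M) a * g = a • g :=
  LinearMap.ext fun m => rfl

end Act

section ExpandFun
variable {R A : Type*} [CommRing R] [CommRing A] [Algebra R A]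

theorem deriv_rel (d : Derivation R A A) :
    ∀ a : A, d.toLinearMap * actHom (R := R) (M := A) a
      = actHom a * d.toLinearMap + actHom (d a) := by
  intro a
  ext x
  show d (a • x) = a • d x + (d a) • x
  simp only [smul_eq_mul, d.leibniz]
  ring

theorem expandFun (d : Derivation R A A) (f : A) (n : ℕ) (x : A) :
    (fun a => f * d a)^[n] x
      = ∑ k ∈ Finset.range (n+1), bco f (⇑d) n k * (⇑d)^[k] x := by
  have hδ0 : (⇑d) 0 = 0 := map_zero d
  have hexp := expand f (⇑d) (actHom (R := R) (M := A)) d.toLinearMap hδ0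
    (deriv_rel d) n
  have hco : ⇑(actHom (R := R) (M := A) f * d.toLinearMap) = fun a => f * d a := by
    funext y
    show f • d y = f * d y
    rw [smul_eq_mul]
  calc (fun a => f * d a)^[n] x
      = ((actHom (R := R) (M := A) f * d.toLinearMap) ^ n) x := by
        rw [Module.End.pow_apply, hco]
    _ = ∑ k ∈ Finset.range (n+1), bco f (⇑d) n k * (⇑d)^[k] x := by
        rw [hexp, LinearMap.coe_sum, Finset.sum_apply]
        refine Finset.sum_congr rfl fun k _ => ?_
        show bco f (⇑d) n k • ((d.toLinearMap ^ k) x) = _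
        rw [Module.End.pow_apply, smul_eq_mul]
        congr 1

end ExpandFun

section Universal
open MvPolynomial

variable (p : ℕ) [hp : Fact p.Prime]

local notation "P" => MvPolynomial ℕ (ZMod p)

/-- The shift derivation on the free differential polynomial ring. -/
noncomputable def dP : Derivation (ZMod p) P P :=
  MvPolynomial.mkDerivation _ (fun i => MvPolynomial.X (i+1))

theorem dP_X (i : ℕ) : dP p (X i) = X (i+1) := MvPolynomial.mkDerivation_X _ _ _

theorem iter_dP_X (k i : ℕ) : (⇑(dP p))^[k] (X i) = X (i+k) := by
  induction k generalizing i with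
  | zero => simp
  | succ k ih =>
    rw [Function.iterate_succ_apply, dP_X, ih]
    congr 1
    omega

/-- Subalgebra generated by the first variables. -/
noncomputable def Sm (n : ℕ) : Subalgebra (ZMod p) P :=
  Algebra.adjoin (ZMod p) { q | ∃ i ≤ n, q = X i }

theorem Sm_mono {m n : ℕ} (h : m ≤ n) : Sm p m ≤ Sm p n :=
  Algebra.adjoin_mono (fun q ⟨i, hi, hq⟩ => ⟨i, le_trans hi h, hq⟩)

theorem dP_mem {n : ℕ} {q : P} (hq : q ∈ Sm p n) : dP p q ∈ Sm p (n+1) := by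
  induction hq using Algebra.adjoin_induction with
  | mem x hx =>
    obtain ⟨i, hi, rfl⟩ := hx
    rw [dP_X]
    exact Algebra.subset_adjoin ⟨i+1, by omega, rfl⟩
  | algebraMap r => rw [Derivation.map_algebraMap]; exact zero_mem _
  | add x y hx hy ihx ihy => rw [map_add]; exact add_mem ihx ihy
  | mul x y hx hy ihx ihy =>
    rw [Derivation.leibniz, smul_eq_mul, smul_eq_mul]
    exact add_mem (mul_mem (Sm_mono p (by omega) hx) ihy)
      (mul_mem (Sm_mono p (by omega) hy) ihx)

theorem bco_mem : ∀ n k : ℕ, bco (X 0) (⇑(dP p)) n k ∈ Sm p n := by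
  intro n
  induction n with
  | zero =>
    intro k
    match k with
    | 0 => exact one_mem _
    | (k+1) => exact zero_mem _
  | succ n ih =>
    intro k
    have hX0 : (X 0 : P) ∈ Sm p (n+1) := Algebra.subset_adjoin ⟨0, by omega, rfl⟩
    match k with
    | 0 =>
      show (X 0 : P) * dP p (bco (X 0) (⇑(dP p)) n 0) ∈ Sm p (n+1)
      exact mul_mem hX0 (dP_mem p (ih 0))
    | (k+1) =>
      show (X 0 : P) * (dP p (bco (X 0) (⇑(dP p)) n (k+1)) + bco (X 0) (⇑(dP p)) n k)
          ∈ Sm p (n+1)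
      exact mul_mem hX0 (add_mem (dP_mem p (ih (k+1))) (Sm_mono p (by omega) (ih k)))

theorem aeval_fix (σ : ℕ → P) (hσ : ∀ i ≤ p, σ i = X i) {q : P} (hq : q ∈ Sm p p) :
    MvPolynomial.aeval σ q = q := by
  induction hq using Algebra.adjoin_induction with
  | mem x hx => obtain ⟨i, hi, rfl⟩ := hx; rw [MvPolynomial.aeval_X, hσ i hi]
  | algebraMap r => exact MvPolynomial.aeval_C _ _
  | add x y hx hy ihx ihy => rw [map_add, ihx, ihy]
  | mul x y hx hy ihx ihy => rw [map_mul, ihx, ihy]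

theorem bco_mid (k0 : ℕ) (h2 : 2 ≤ k0) (hk0 : k0 ≤ p - 1) :
    bco (X 0) (⇑(dP p)) p k0 = 0 := by
  have hpge : 2 ≤ p := hp.out.two_le
  set d := dP p with hd
  set N := p + 2 with hN
  set Mi := 2*p + 4 with hMi
  set c : ℕ → P := fun k => bco (X 0) (⇑d) p k with hc
  -- the smul-derivation X 0 • d has coercion fun a => X 0 * d a
  have hW : ⇑((X 0 : P) • d) = fun a => (X 0 : P) * d a := by
    funext a
    show (X 0 : P) • d a = (X 0 : P) * d a
    rw [smul_eq_mul]
  -- main equation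
  have EQ : ∑ k ∈ Finset.range (p+1), c k *
        (∑ j ∈ Finset.range (k+1), k.choose j • ((X (N + (k - j)) : P) * X (Mi + j)))
      = X N * (∑ k ∈ Finset.range (p+1), c k * X (Mi + k))
        + X Mi * (∑ k ∈ Finset.range (p+1), c k * X (N + k)) := by
    have e1 : (fun a => (X 0 : P) * d a)^[p] ((X N : P) * X Mi)
        = ∑ k ∈ Finset.range (p+1), c k *
            (∑ j ∈ Finset.range (k+1), k.choose j • ((X (N + (k - j)) : P) * X (Mi + j))) := by
      rw [expandFun d (X 0) p ((X N : P) * X Mi)]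
      refine Finset.sum_congr rfl fun k _ => ?_
      congr 1
      rw [iterate_leibniz d k (X N) (X Mi)]
      refine Finset.sum_congr rfl fun j _ => ?_
      rw [iter_dP_X, iter_dP_X]
    have e2 : (fun a => (X 0 : P) * d a)^[p] ((X N : P) * X Mi)
        = X N * (∑ k ∈ Finset.range (p+1), c k * X (Mi + k))
          + X Mi * (∑ k ∈ Finset.range (p+1), c k * X (N + k)) := by
      rw [← hW, iterate_p_leibniz p ((X 0 : P) • d) (X N) (X Mi)]
      congr 1
      · congr 1
        rw [hW, expandFun d (X 0) p (X Mi)]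
        exact Finset.sum_congr rfl fun k _ => by rw [iter_dP_X]
      · congr 1
        rw [hW, expandFun d (X 0) p (X N)]
        exact Finset.sum_congr rfl fun k _ => by rw [iter_dP_X]
    rw [← e1, e2]
  -- the evaluation killing all large variables except two
  set σ : ℕ → P := fun i => if i ≤ p ∨ i = N + 1 ∨ i = Mi + k0 - 1 then X i else 0 with hσ
  have hσkeep : ∀ i ≤ p, σ i = X i := fun i hi => by simp [hσ, hi]
  have hσN1 : σ (N + 1) = X (N + 1) := by simp [hσ]
  have hσMik : σ (Mi + k0 - 1) = X (Mi + k0 - 1) := by simp [hσ]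
  have hσzero : ∀ i, ¬(i ≤ p ∨ i = N + 1 ∨ i = Mi + k0 - 1) → σ i = 0 := fun i hi => by
    simp only [hσ, if_neg hi]
  have happ := congrArg (MvPolynomial.aeval σ) EQ
  rw [map_add, map_mul, map_mul, map_sum] at happ
  rw [MvPolynomial.aeval_X, MvPolynomial.aeval_X] at happ
  rw [hσzero N (by omega), hσzero Mi (by omega), zero_mul, zero_mul, add_zero] at happ
  -- compute the left side
  have hterm : ∀ k ∈ Finset.range (p+1), ∀ j ∈ Finset.range (k+1),
      ¬(k = k0 ∧ j = k0 - 1) →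
      MvPolynomial.aeval σ (k.choose j • ((X (N + (k - j)) : P) * X (Mi + j))) = 0 := by
    intro k hk j hj hne
    rw [Finset.mem_range] at hk hj
    rw [map_nsmul, map_mul, MvPolynomial.aeval_X, MvPolynomial.aeval_X]
    by_cases h1 : k - j = 1
    · have hjk : j = k - 1 := by omega
      have hkne : k ≠ k0 := by
        intro hkk; exact hne ⟨hkk, by omega⟩
      rw [hσzero (Mi + j) (by omega), mul_zero, smul_zero]
    · rw [hσzero (N + (k - j)) (by omega), zero_mul, smul_zero]
  have hLHS : ∑ k ∈ Finset.range (p+1), MvPolynomial.aeval σ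
        (c k * (∑ j ∈ Finset.range (k+1), k.choose j • ((X (N + (k - j)) : P) * X (Mi + j))))
      = c k0 * (k0 • ((X (N+1) : P) * X (Mi + k0 - 1))) := by
    rw [Finset.sum_eq_single k0]
    · rw [map_mul, map_sum, aeval_fix p σ hσkeep (bco_mem p p k0)]
      congr 1
      rw [Finset.sum_eq_single (k0 - 1)]
      · rw [map_nsmul, map_mul, MvPolynomial.aeval_X, MvPolynomial.aeval_X]
        rw [show N + (k0 - (k0 - 1)) = N + 1 by omega, show Mi + (k0 - 1) = Mi + k0 - 1 by omega,
          hσN1, hσMik]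
        rw [show k0.choose (k0 - 1) = k0 by
          rw [Nat.choose_symm (by omega : 1 ≤ k0), Nat.choose_one_right]]
      · intro j hj hjne
        exact hterm k0 (Finset.mem_range.mpr (by omega)) j hj (fun ⟨_, h⟩ => hjne h)
      · intro h
        exact absurd (Finset.mem_range.mpr (by omega)) h
    · intro k hk hkne
      rw [map_mul, map_sum,
        Finset.sum_congr rfl (fun j hj => hterm k hk j hj (fun h => hkne h.1)),
        Finset.sum_const_zero, mul_zero]
    · intro h
      exact absurd (Finset.mem_range.mpr (by omega)) h
  rw [hLHS, nsmul_eq_mul] at happ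
  have h1 : ((k0 : ℕ) : P) ≠ 0 := by
    intro h
    have hdvd := (CharP.cast_eq_zero_iff P p k0).mp h
    have := Nat.le_of_dvd (by omega) hdvd
    omega
  rcases mul_eq_zero.mp happ with h | h
  · exact h
  · exfalso
    rcases mul_eq_zero.mp h with h' | h'
    · exact h1 h'
    · rcases mul_eq_zero.mp h' with h'' | h''
      · exact MvPolynomial.X_ne_zero _ h''
      · exact MvPolynomial.X_ne_zero _ h''

end Universal

theorem sum_collapse {E : Type*} [AddCommMonoid E] {p : ℕ} (hp2 : 2 ≤ p) (F : ℕ → E)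
    (hF : ∀ k, k ∈ Finset.range (p+1) → k ≠ 1 → k ≠ p → F k = 0) :
    ∑ k ∈ Finset.range (p+1), F k = F 1 + F p := by
  rw [← Finset.sum_pair (show (1:ℕ) ≠ p by omega)]
  apply (Finset.sum_subset ?_ ?_).symm
  · intro x hx
    simp only [Finset.mem_insert, Finset.mem_singleton] at hx
    rcases hx with rfl | rfl <;> exact Finset.mem_range.mpr (by omega)
  · intro x hx hxn
    simp only [Finset.mem_insert, Finset.mem_singleton] at hxn
    push_neg at hxn
    exact hF x hx hxn.1 hxn.2

section Transfer
open MvPolynomial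
variable {R A : Type*} [CommRing R] [CommRing A] [Algebra R A]
variable (p : ℕ) [hp : Fact p.Prime] [CharP A p]

/-- Evaluation of the free differential ring into `A`, sending `X i` to `D^[i] f`. -/
noncomputable def tr (D : Derivation R A A) (f : A) : MvPolynomial ℕ (ZMod p) →+* A :=
  MvPolynomial.eval₂Hom (ZMod.castHom dvd_rfl A) (fun i => (⇑D)^[i] f)

theorem tr_X (D : Derivation R A A) (f : A) (i : ℕ) :
    tr p D f (X i) = (⇑D)^[i] f := by
  simp [tr]

theorem tr_comm (D : Derivation R A A) (f : A) :
    ∀ q, tr p D f (dP p q) = D (tr p D f q) := by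
  intro q
  induction q using MvPolynomial.induction_on with
  | C r =>
    have h0 : dP p (C r) = 0 := by
      rw [show (C r : MvPolynomial ℕ (ZMod p)) = algebraMap (ZMod p) _ r from rfl,
        Derivation.map_algebraMap]
    have h1 : tr p D f (C r) = ((r.val : ℕ) : A) := by
      have h2 : tr p D f (C r) = ZMod.castHom dvd_rfl A r := by simp [tr]
      rw [h2]
      conv_lhs => rw [← ZMod.natCast_rightInverse r]
      rw [map_natCast]
    rw [h0, map_zero, h1, Derivation.map_natCast]
  | add q₁ q₂ ih₁ ih₂ => rw [map_add, map_add, map_add, ih₁, ih₂, map_add]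
  | mul_X q i ih =>
    have hL : dP p (q * X i) = q * X (i+1) + X i * dP p q := by
      rw [Derivation.leibniz, dP_X, smul_eq_mul, smul_eq_mul]
    rw [hL, map_add, map_mul, map_mul, tr_X, tr_X, ih, map_mul, tr_X,
      Derivation.leibniz, smul_eq_mul, smul_eq_mul, Function.iterate_succ_apply']

/-- Middle coefficients vanish in any characteristic-`p` setting. -/
theorem bco_mid_gen (D : Derivation R A A) (f : A) (k0 : ℕ) (h2 : 2 ≤ k0)
    (hk0 : k0 ≤ p - 1) : bco f (⇑D) p k0 = 0 := by
  have h := bco_map (X 0 : MvPolynomial ℕ (ZMod p)) (⇑(dP p)) (tr p D f) (⇑D)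
    (fun a => tr_comm p D f a) p k0
  rw [bco_mid p k0 h2 hk0, map_zero] at h
  have hX0 : tr p D f (X 0) = f := by rw [tr_X]; rfl
  rw [hX0] at h
  exact h.symm

end Transfer

end PCurvAux

universe u

/-- **p-linearity of the p-curvature** (Katz, Proposition 5.2).
For a module with integrable connection on a smooth `R`-algebra `A` in characteristic
`p > 0`, the `p`-curvature `ψ(∇)(D) = (∇ D)^p - ∇(D^p)` satisfies
`ψ(∇)(f • D) = f^p • ψ(∇)(D)` for `f` a function and `D` a derivation. -/
theorem p_curvature_p_linear
    {R A : Type u} {M : Type*} [CommRing R] [CommRing A] [Algebra R A]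
    [AddCommGroup M] [Module R M] [Module A M] [IsScalarTower R A M]
    (p : ℕ) [Fact p.Prime] [CharP A p]
    [Algebra.FormallySmooth R A]
    (conn : Derivation R A A → Module.End R M)
    (hadd : ∀ D₁ D₂ : Derivation R A A, conn (D₁ + D₂) = conn D₁ + conn D₂)
    (hlin : ∀ (f : A) (D : Derivation R A A), conn (f • D) = f • conn D)
    (hleibniz : ∀ (D : Derivation R A A) (a : A) (m : M),
      conn D (a • m) = a • conn D m + D a • m)
    (hint : ∀ D₁ D₂ : Derivation R A A, conn ⁅D₁, D₂⁆ = ⁅conn D₁, conn D₂⁆)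
    (f : A) (D Dp Dfp : Derivation R A A)
    (hDp : ∀ a : A, Dp a = (⇑D)^[p] a)
    (hDfp : ∀ a : A, Dfp a = (⇑(f • D))^[p] a) :
    (conn (f • D)) ^ p - conn Dfp = f ^ p • ((conn D) ^ p - conn Dp) := by
  classical
  have hp2 : 2 ≤ p := (Fact.out : p.Prime).two_le
  obtain ⟨m, hm⟩ : ∃ m, p = m + 1 := ⟨p - 1, by omega⟩
  have hδ0 : (⇑D) 0 = 0 := map_zero D
  have hδ1 : (⇑D) 1 = 0 := D.map_one_eq_zero
  set c : A := PCurvAux.bco f (⇑D) p 1 with hc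
  -- vanishing / identification of the coefficients
  have hbz : PCurvAux.bco f (⇑D) p 0 = 0 := by
    rw [hm]; exact PCurvAux.bco_zero f (⇑D) hδ0 hδ1 m
  have hbmid : ∀ k, 2 ≤ k → k ≤ p - 1 → PCurvAux.bco f (⇑D) p k = 0 :=
    fun k h2 hk => PCurvAux.bco_mid_gen p D f k h2 hk
  have hbp : PCurvAux.bco f (⇑D) p p = f ^ p := PCurvAux.bco_diag f (⇑D) hδ0 p
  -- the coercion of f • D
  have hfD : ⇑(f • D) = fun x => f * D x := by
    funext x
    show f • D x = f * D x
    rw [smul_eq_mul]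
  -- Derivation identity : Dfp = f ^ p • Dp + c • D
  have hDer : Dfp = f ^ p • Dp + c • D := by
    ext a
    have h1 : Dfp a = ∑ k ∈ Finset.range (p+1),
        PCurvAux.bco f (⇑D) p k * (⇑D)^[k] a := by
      rw [hDfp a, hfD, PCurvAux.expandFun D f p a]
    have h2 : ∑ k ∈ Finset.range (p+1), PCurvAux.bco f (⇑D) p k * (⇑D)^[k] a
        = c * (⇑D)^[1] a + f ^ p * (⇑D)^[p] a := by
      rw [PCurvAux.sum_collapse hp2 _ ?_, hbp]
      intro k hk h1 hp'
      rw [Finset.mem_range] at hk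
      rcases Nat.eq_or_lt_of_le (Nat.zero_le k) with h0 | h0
      · rw [← h0, hbz, zero_mul]
      · rw [hbmid k (by omega) (by omega), zero_mul]
    rw [h1, h2]
    show c * (⇑D)^[1] a + f ^ p * (⇑D)^[p] a = f ^ p • Dp a + c • D a
    rw [hDp a, smul_eq_mul, smul_eq_mul, Function.iterate_one]
    ring
  -- connection side
  set u : Module.End R M := conn D with hu
  set L : A →+* Module.End R M := PCurvAux.actHom (R := R) (M := M) with hL
  have hrel : ∀ a : A, u * L a = L a * u + L (D a) := by
    intro a
    ext mm
    show u (a • mm) = a • u mm + (D a) • mm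
    exact hleibniz D a mm
  have hconnfD : conn (f • D) = L f * u := by
    rw [hlin, PCurvAux.actHom_mul_eq_smul]
  have hexp : (L f * u) ^ p = ∑ k ∈ Finset.range (p+1),
      L (PCurvAux.bco f (⇑D) p k) * u ^ k :=
    PCurvAux.expand f (⇑D) L u hδ0 hrel p
  have hsum : ∑ k ∈ Finset.range (p+1), L (PCurvAux.bco f (⇑D) p k) * u ^ k
      = c • u + f ^ p • u ^ p := by
    rw [PCurvAux.sum_collapse hp2 _ ?_, hbp, pow_one, PCurvAux.actHom_mul_eq_smul,
      PCurvAux.actHom_mul_eq_smul]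
    intro k hk h1 hp'
    rw [Finset.mem_range] at hk
    rcases Nat.eq_or_lt_of_le (Nat.zero_le k) with h0 | h0
    · rw [← h0, hbz, map_zero, zero_mul]
    · rw [hbmid k (by omega) (by omega), map_zero, zero_mul]
  have hconnDfp : conn Dfp = f ^ p • conn Dp + c • u := by
    rw [hDer, hadd, hlin, hlin]
  rw [hconnfD, hexp, hsum, hconnDfp, smul_sub]
  abel
end
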